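/- arXiv:1710.03178 — 2 statements merged into one kernel-verified Lean document; each statement's English description precedes it below -/
import Mathlib

section
/- With the sequences defined as in the broadcast construction applied to a connected graph G, for each i ≥ 1, if Iᵢ ≠ V(G), then Nᵢ ≠ ∅. -/
/-! The frontier `Fᵢ` is the set of unvisited vertices with a neighbour in `Iᵢ`; it is nonempty
while `Iᵢ ≠ V(G)` because `G` is connected. A minimal dominating set `Dᵢ` of a nonempty `Fᵢ` cannot
have every frontier vertex adjacent to two of its members, for otherwise any one member could be
removed; so some frontier vertex has exactly one neighbour in `Dᵢ`, i.e. lies in `Nᵢ`. -/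

def nbhd {V : Type*} (G : SimpleGraph V) (X : Set V) : Set V :=
  {v | ∃ w ∈ X, G.Adj v w}

def dominates {V : Type*} (G : SimpleGraph V) (X Y : Set V) : Prop :=
  ∀ y ∈ Y, ∃ x ∈ X, G.Adj y x

section

variable {V : Type*} {G : SimpleGraph V}

theorem SimpleGraph.Connected.nbhd_diff_nonempty (hconn : G.Connected) {X : Set V} {x : V}
    (hx : x ∈ X) (hX : X ≠ Set.univ) : (nbhd G X \ X).Nonempty := by
  obtain ⟨u, hu⟩ := (Set.ne_univ_iff_exists_notMem X).1 hX
  obtain ⟨p⟩ := hconn.preconnected x u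
  obtain ⟨d, -, hd₁, hd₂⟩ := p.exists_boundary_dart X hx hu
  exact ⟨d.snd, ⟨d.fst, hd₁, d.adj.symm⟩, hd₂⟩

theorem dominates.diff_singleton {D F : Set V} (hdom : dominates G D F)
    (hF : ∀ w ∈ F, ¬∃! d, d ∈ D ∧ G.Adj w d) (d₀ : V) : dominates G (D \ {d₀}) F := by
  intro w hw
  obtain ⟨d, hd, hwd⟩ := hdom w hw
  by_cases hd₀ : d = d₀
  · obtain ⟨d', ⟨hd', hwd'⟩, hne⟩ : ∃ d', (d' ∈ D ∧ G.Adj w d') ∧ d' ≠ d := by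
      by_contra! h
      exact hF w hw ⟨d, ⟨hd, hwd⟩, h⟩
    exact ⟨d', ⟨hd', hd₀ ▸ hne⟩, hwd'⟩
  · exact ⟨d, ⟨hd, hd₀⟩, hwd⟩

theorem exists_unique_adj_of_minimal_dominates {D F : Set V} (hdom : dominates G D F)
    (hmin : ∀ D' ⊆ D, dominates G D' F → D' = D) (hF : F.Nonempty) :
    ∃ w ∈ F, ∃! d, d ∈ D ∧ G.Adj w d := by
  obtain ⟨y, hy⟩ := hF
  obtain ⟨d₀, hd₀, -⟩ := hdom y hy
  by_contra! h
  have hD := hmin _ Set.sdiff_subset (hdom.diff_singleton h d₀)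
  exact (hD.symm ▸ hd₀ : d₀ ∈ D \ {d₀}).2 rfl

end

section

variable {V : Type*} {I U N : ℕ → Set V}

theorem subset_of_union_step (hI : ∀ i, 1 ≤ i → I (i + 1) = I i ∪ N i) :
    ∀ i, 1 ≤ i → I 1 ⊆ I i := by
  intro i hi
  induction i, hi using Nat.le_induction with
  | base => exact subset_rfl
  | succ i hi ih => exact (hI i hi).symm ▸ ih.trans Set.subset_union_left

theorem eq_compl_of_union_diff_step (h₁ : U 1 = (I 1)ᶜ)
    (hI : ∀ i, 1 ≤ i → I (i + 1) = I i ∪ N i) (hU : ∀ i, 1 ≤ i → U (i + 1) = U i \ N i) :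
    ∀ i, 1 ≤ i → U i = (I i)ᶜ := by
  intro i hi
  induction i, hi using Nat.le_induction with
  | base => exact h₁
  | succ i hi ih => rw [hU i hi, hI i hi, ih, Set.compl_union, Set.sdiff_eq]

end

theorem stmt_5_general {V : Type*} (G : SimpleGraph V) (hconn : G.Connected)
    (s : V) (I U F D N : ℕ → Set V)
    (hI1 : I 1 = {s}) (hU1 : U 1 = Set.univ \ {s})
    (hN1 : N 1 = nbhd G {s})
    (hI : ∀ i, 1 ≤ i → I (i + 1) = I i ∪ N i)
    (hU : ∀ i, 1 ≤ i → U (i + 1) = U i \ N i)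
    (hF : ∀ i, 1 ≤ i → F (i + 1) = U (i + 1) ∩ nbhd G (I (i + 1)))
    (hDdom : ∀ i, 1 ≤ i → dominates G (D (i + 1)) (F (i + 1)))
    (hDmin : ∀ i, 1 ≤ i → ∀ D' ⊆ D (i + 1), dominates G D' (F (i + 1)) → D' = D (i + 1))
    (hN : ∀ i, 1 ≤ i → N (i + 1) = {w ∈ F (i + 1) | ∃! d, d ∈ D (i + 1) ∧ G.Adj w d}) :
    ∀ i, 1 ≤ i → I i ≠ Set.univ → (N i).Nonempty := by
  intro i hi hne
  have hs : s ∈ I i := subset_of_union_step hI i hi (hI1 ▸ rfl)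
  have hUI := eq_compl_of_union_diff_step (by rw [hU1, hI1, Set.compl_eq_univ_sdiff]) hI hU
  obtain ⟨w, hw⟩ := hconn.nbhd_diff_nonempty hs hne
  obtain rfl | ⟨j, hj, rfl⟩ : i = 1 ∨ ∃ j, 1 ≤ j ∧ i = j + 1 :=
    (Nat.eq_or_lt_of_le hi).imp Eq.symm fun h => ⟨i - 1, by omega, by omega⟩
  · rw [hI1] at hw
    exact ⟨w, hN1 ▸ hw.1⟩
  · have hFne : (F (j + 1)).Nonempty := by
      rw [hF j hj, hUI (j + 1) hi, Set.inter_comm, ← Set.sdiff_eq]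
      exact ⟨w, hw⟩
    obtain ⟨w, hwF, huniq⟩ := exists_unique_adj_of_minimal_dominates (hDdom j hj) (hDmin j hj) hFne
    exact ⟨w, hN j hj ▸ ⟨hwF, huniq⟩⟩

theorem stmt_5 {V : Type*} [Fintype V] (G : SimpleGraph V) (hconn : G.Connected)
    (hcard : 2 ≤ Fintype.card V)
    (s : V) (I U F D N : ℕ → Set V)
    (hI1 : I 1 = {s}) (hU1 : U 1 = Set.univ \ {s})
    (hF1 : F 1 = nbhd G {s}) (hN1 : N 1 = nbhd G {s}) (hD1 : D 1 = {s})
    (hI : ∀ i, 1 ≤ i → I (i + 1) = I i ∪ N i)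
    (hU : ∀ i, 1 ≤ i → U (i + 1) = U i \ N i)
    (hF : ∀ i, 1 ≤ i → F (i + 1) = U (i + 1) ∩ nbhd G (I (i + 1)))
    (hDsub : ∀ i, 1 ≤ i → D (i + 1) ⊆ D i ∪ N i)
    (hDdom : ∀ i, 1 ≤ i → dominates G (D (i + 1)) (F (i + 1)))
    (hDmin : ∀ i, 1 ≤ i → ∀ D' ⊆ D (i + 1), dominates G D' (F (i + 1)) → D' = D (i + 1))
    (hN : ∀ i, 1 ≤ i → N (i + 1) = {w ∈ F (i + 1) | ∃! d, d ∈ D (i + 1) ∧ G.Adj w d}) :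
    ∀ i, 1 ≤ i → I i ≠ Set.univ → (N i).Nonempty :=
  stmt_5_general G hconn s I U F D N hI1 hU1 hN1 hI hU hF hDdom hDmin hN
end

section
/- With the sequences defined as in the broadcast construction, for all i ≥ 2, the set Dᵢ₋₁ ∪ Nᵢ₋₁ dominates all vertices of Fᵢ (hence a minimal dominating subset Dᵢ ⊆ Dᵢ₋₁ ∪ Nᵢ₋₁ for Fᵢ exists). -/
theorem dominates_union_of_inter_nbhd_subset {V : Type*} (G : SimpleGraph V)
    {X N Y Z D : Set V} (hZ : Y ∩ nbhd G X ⊆ Z) (hD : dominates G D Z) :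
    dominates G (D ∪ N) (Y ∩ nbhd G (X ∪ N)) := by
  rintro v ⟨hvY, w, hw | hw, hvw⟩
  · obtain ⟨x, hx, hvx⟩ := hD v (hZ ⟨hvY, w, hw, hvw⟩)
    exact ⟨x, Or.inl hx, hvx⟩
  · exact ⟨w, Or.inr hw, hvw⟩

theorem stmt_6_general {V : Type*} (G : SimpleGraph V)
    (s : V) (I U F D N : ℕ → Set V)
    (hI1 : I 1 = {s})
    (hF1 : F 1 = nbhd G {s})
    (hI : ∀ i, 1 ≤ i → I (i + 1) = I i ∪ N i)
    (hU : ∀ i, 1 ≤ i → U (i + 1) = U i \ N i)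
    (hF : ∀ i, 1 ≤ i → F (i + 1) = U (i + 1) ∩ nbhd G (I (i + 1)))
    (hDdom : ∀ i, 1 ≤ i → dominates G (D i) (F i)) :
    ∀ i, 1 ≤ i → dominates G (D i ∪ N i) (F (i + 1)) := by
  intro i hi
  have hfrontier : U i ∩ nbhd G (I i) ⊆ F i := by
    obtain ⟨j, rfl⟩ := Nat.exists_eq_add_of_le' hi
    rcases j with _ | j
    · rw [hI1, hF1]
      exact Set.inter_subset_right
    · rw [hF (j + 1) (by omega)]
  rw [hF i hi, hI i hi]
  refine dominates_union_of_inter_nbhd_subset G ?_ (hDdom i hi)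
  rw [hU i hi]
  exact fun v ⟨⟨hvU, _⟩, hvI⟩ => hfrontier ⟨hvU, hvI⟩

theorem stmt_6 {V : Type*} [Fintype V] (G : SimpleGraph V) (hconn : G.Connected)
    (s : V) (I U F D N : ℕ → Set V)
    (hI1 : I 1 = {s}) (hU1 : U 1 = Set.univ \ {s})
    (hF1 : F 1 = nbhd G {s}) (hN1 : N 1 = nbhd G {s}) (hD1 : D 1 = {s})
    (hI : ∀ i, 1 ≤ i → I (i + 1) = I i ∪ N i)
    (hU : ∀ i, 1 ≤ i → U (i + 1) = U i \ N i)
    (hF : ∀ i, 1 ≤ i → F (i + 1) = U (i + 1) ∩ nbhd G (I (i + 1)))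
    (hDdom : ∀ i, 1 ≤ i → dominates G (D i) (F i))
    (hNsub : ∀ i, 1 ≤ i → N i ⊆ F i) :
    ∀ i, 1 ≤ i → dominates G (D i ∪ N i) (F (i + 1)) :=
  stmt_6_general G s I U F D N hI1 hF1 hI hU hF hDdom
end
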